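/- Let K be a kernel and ν a σ-finite measure on a measurable space (E, ℬ) such that for every B ∈ ℬ with ν(B) = 0 one has K1_B = 0 ν-a.e. If E₀ ∈ ℬ satisfies ν(E \ E₀) = 0, then there exists F ∈ ℬ with F ⊆ E₀, ν(E \ F) = 0, and K1_{E\F}(x) = 0 for every x ∈ F. -/

import Mathlib

open MeasureTheory ProbabilityTheory

/-! Remove from `E₀` the points from which `K` charges the complement, and repeat. Each round
discards only a `ν`-null set, because the complement of the current set is `ν`-null and hence
charged by `K` only from a `ν`-null set of points. The intersection `F` of all rounds is still
co-null, and a point of `F` survived every round, so `K` does not charge any of the countably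
many complements whose union is `Fᶜ`. -/

namespace ProbabilityTheory.Kernel

variable {E : Type*} [MeasurableSpace E] (K : Kernel E E)

def absorbingPart (A : Set E) : Set E := A ∩ {x | K x Aᶜ = 0}

def absorbingCore (A : Set E) : Set E := ⋂ n, K.absorbingPart^[n] A

variable {K}

lemma measurableSet_absorbingPart {A : Set E} (hA : MeasurableSet A) :
    MeasurableSet (K.absorbingPart A) :=
  hA.inter (K.measurable_coe hA.compl (measurableSet_singleton 0))

lemma measure_compl_absorbingPart {ν : Measure E} {A : Set E} (hνA : ν Aᶜ = 0)
    (hKA : ∀ᵐ x ∂ν, K x Aᶜ = 0) : ν (K.absorbingPart A)ᶜ = 0 := by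
  rw [absorbingPart, Set.compl_inter]
  exact measure_union_null hνA (ae_iff.mp hKA)

lemma measurableSet_iterate_absorbingPart {A : Set E} (hA : MeasurableSet A) (n : ℕ) :
    MeasurableSet (K.absorbingPart^[n] A) := by
  induction n with
  | zero => exact hA
  | succ n ih => simpa only [Function.iterate_succ_apply'] using measurableSet_absorbingPart ih

lemma measurableSet_absorbingCore {A : Set E} (hA : MeasurableSet A) :
    MeasurableSet (K.absorbingCore A) :=
  .iInter (measurableSet_iterate_absorbingPart hA)

lemma absorbingCore_subset (A : Set E) : K.absorbingCore A ⊆ A :=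
  Set.iInter_subset (fun n ↦ K.absorbingPart^[n] A) 0

lemma measure_compl_absorbingCore {ν : Measure E}
    (hK : ∀ B : Set E, MeasurableSet B → ν B = 0 → ∀ᵐ x ∂ν, K x B = 0)
    {A : Set E} (hA : MeasurableSet A) (hνA : ν Aᶜ = 0) : ν (K.absorbingCore A)ᶜ = 0 := by
  have hnull : ∀ n, ν (K.absorbingPart^[n] A)ᶜ = 0 := by
    intro n
    induction n with
    | zero => exact hνA
    | succ n ih =>
      rw [Function.iterate_succ_apply']
      exact measure_compl_absorbingPart ih
        (hK _ (measurableSet_iterate_absorbingPart hA n).compl ih)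
  rw [absorbingCore, Set.compl_iInter]
  exact measure_iUnion_null hnull

lemma apply_compl_absorbingCore_eq_zero {A : Set E} {x : E} (hx : x ∈ K.absorbingCore A) :
    K x (K.absorbingCore A)ᶜ = 0 := by
  have hzero (n : ℕ) : K x (K.absorbingPart^[n] A)ᶜ = 0 := by
    have hx' := Set.mem_iInter.mp hx (n + 1)
    rw [Function.iterate_succ_apply'] at hx'
    exact hx'.2
  rw [absorbingCore, Set.compl_iInter]
  exact measure_iUnion_null hzero

end ProbabilityTheory.Kernel

theorem kernel_absorption_general
    {E : Type*} [MeasurableSpace E]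
    (K : Kernel E E) (ν : Measure E)
    (hK : ∀ B : Set E, MeasurableSet B → ν B = 0 → ∀ᵐ x ∂ν, K x B = 0)
    (E₀ : Set E) (hE₀ : MeasurableSet E₀) (hν : ν E₀ᶜ = 0) :
    ∃ F : Set E, MeasurableSet F ∧ F ⊆ E₀ ∧ ν Fᶜ = 0 ∧ ∀ x ∈ F, K x Fᶜ = 0 :=
  ⟨K.absorbingCore E₀, Kernel.measurableSet_absorbingCore hE₀, Kernel.absorbingCore_subset E₀,
    Kernel.measure_compl_absorbingCore hK hE₀ hν,
    fun _ hx ↦ Kernel.apply_compl_absorbingCore_eq_zero hx⟩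

/-- Kernel absorption lemma: if `K` is a kernel and `ν` a σ-finite measure such that
`ν(B) = 0` implies `K1_B = 0` ν-a.e., then for every measurable `E₀` with
`ν(E \ E₀) = 0` there exists a measurable `F ⊆ E₀` with `ν(E \ F) = 0` and
`K1_{E\F} = 0` on `F`. -/
theorem kernel_absorption
    {E : Type*} [MeasurableSpace E]
    (K : Kernel E E) (ν : Measure E) [SigmaFinite ν]
    (hK : ∀ B : Set E, MeasurableSet B → ν B = 0 → ∀ᵐ x ∂ν, K x B = 0)
    (E₀ : Set E) (hE₀ : MeasurableSet E₀) (hν : ν E₀ᶜ = 0) :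
    ∃ F : Set E, MeasurableSet F ∧ F ⊆ E₀ ∧ ν Fᶜ = 0 ∧ ∀ x ∈ F, K x Fᶜ = 0 :=
  kernel_absorption_general K ν hK E₀ hE₀ hν
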